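/- (Acyclicity of minimal walks over clusters.) Let A be a cluster of grading g·𝟏 and let α, β be configurations contained in A. Then every configuration sequence connecting α and β of minimal transfer length is entirely contained in A. Equivalently: for any valid sequence ν from α to β that leaves A, there exists a valid sequence μ from α to β contained in A with strictly smaller transfer length. -/

import Mathlib

/-- A configuration of `t` towers of `n` disks on `p` posts: entry `α u y` is the
post occupied by the `y`-th largest disk of color `u` (columns 0-indexed,
column `y` holds the disks of size index `y`). -/
abbrev Config (t n p : ℕ) := Fin t → Fin n → Fin p

/-- Validity: no two equal-sized disks share a post (column-wise injectivity). -/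
def ValidConfig {t n p : ℕ} (α : Config t n p) : Prop :=
  ∀ y : Fin n, Function.Injective fun u => α u y

/-- EREW-adjacency: at least one disk moves, and every moved disk is topmost at
its source beforehand and at its destination afterwards. -/
def EREW {t n p : ℕ} (α β : Config t n p) : Prop :=
  α ≠ β ∧
    ∀ u j, α u j ≠ β u j →
      ∀ v : Fin t, ∀ y : Fin n, (j : ℕ) < (y : ℕ) →
        α v y ≠ α u j ∧ β v y ≠ β u j

/-- One step of a valid sequence: equal or EREW-adjacent configurations. -/
def Step {t n p : ℕ} (α β : Config t n p) : Prop := α = β ∨ EREW α β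

/-- The set of disks moved between two configurations (the transfer vector:
each moved disk determines its source and destination posts). -/
def moves {t n p : ℕ} (α β : Config t n p) : Finset (Fin t × Fin n) :=
  Finset.univ.filter fun d => α d.1 d.2 ≠ β d.1 d.2

/-- A valid sequence of configurations. -/
def ValidSeq {t n p : ℕ} (l : List (Config t n p)) : Prop :=
  (∀ α ∈ l, ValidConfig α) ∧ l.Chain' Step

/-- Transfer length of a configuration sequence: total number of disk moves. -/
def transferLength {t n p : ℕ} : List (Config t n p) → ℕ
  | [] => 0
  | [_] => 0
  | α :: β :: rest => (moves α β).card + transferLength (β :: rest)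

/-- Containment in the cluster of grading `g·𝟏` determined by the placement `B`:
the configuration agrees with `B` on all columns of index `< g`. -/
def InCluster {t n p : ℕ} (g : ℕ) (B α : Config t n p) : Prop :=
  ∀ u : Fin t, ∀ y : Fin n, (y : ℕ) < g → α u y = B u y

/-- The translative map onto the cluster of grading `g·𝟏` determined by `B`. -/
def T {t n p : ℕ} (g : ℕ) (B : Config t n p) (α : Config t n p) : Config t n p :=
  fun u y => if (y : ℕ) < g then B u y else α u y

/-- The reflective map swapping posts `q` and `r` on all columns of index `≥ g`. -/
def R {t n p : ℕ} (g : ℕ) (q r : Fin p) (α : Config t n p) : Config t n p :=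
  fun u y => if g ≤ (y : ℕ) then
    (if α u y = q then r else if α u y = r then q else α u y) else α u y

/-!
The translative map `T g A` overwrites the `g` largest disks of each color by their
posts in `A`. It fixes every configuration of the cluster, maps valid configurations
to valid ones (as `A` is valid) and steps to steps (only disks of index `≥ g` can still
move, and for those the topmost conditions are untouched), and it can only delete
moves. Applied to a sequence that leaves the cluster it deletes the move of a disk of
index `< g` at the first step leaving the cluster, so the transfer length drops
strictly.
-/

theorem mem_moves {t n p : ℕ} {α β : Config t n p} {d : Fin t × Fin n} :
    d ∈ moves α β ↔ α d.1 d.2 ≠ β d.1 d.2 := by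
  simp [moves]

section TransferLength

variable {t n p : ℕ} (f : Config t n p → Config t n p)

theorem transferLength_map_le (hf : ∀ a b, moves (f a) (f b) ⊆ moves a b) :
    ∀ l : List (Config t n p), transferLength (l.map f) ≤ transferLength l
  | [] | [_] => le_rfl
  | a :: b :: rest => by
    simp only [List.map_cons, transferLength]
    exact Nat.add_le_add (Finset.card_le_card (hf a b)) (transferLength_map_le hf (b :: rest))

theorem transferLength_map_lt (hf : ∀ a b, moves (f a) (f b) ⊆ moves a b)
    {P : Config t n p → Prop} (hP : ∀ a b, P a → ¬ P b → (moves (f a) (f b)).card < (moves a b).card) :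
    ∀ (a : Config t n p) (l : List (Config t n p)), P a → (∃ b ∈ a :: l, ¬ P b) →
      transferLength ((a :: l).map f) < transferLength (a :: l)
  | a, [], ha, hl => by simp_all
  | a, b :: rest, ha, hl => by
    simp only [List.map_cons, transferLength]
    by_cases hb : P b
    · have hrest : ∃ c ∈ b :: rest, ¬ P c := by
        obtain ⟨c, hc, hPc⟩ := hl
        rcases List.mem_cons.mp hc with rfl | hc
        · exact absurd ha hPc
        · exact ⟨c, hc, hPc⟩
      exact Nat.add_lt_add_of_le_of_lt (Finset.card_le_card (hf a b))
        (by simpa using transferLength_map_lt hf hP b rest hb hrest)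
    · exact Nat.add_lt_add_of_lt_of_le (hP a b ha hb) (transferLength_map_le f hf (b :: rest))

end TransferLength

section Translative

variable {t n p : ℕ} (g : ℕ) (A : Config t n p)

theorem T_eq_of_inCluster {α : Config t n p} (h : InCluster g A α) : T g A α = α := by
  funext u y
  by_cases hy : (y : ℕ) < g
  · simp [T, hy, h u y hy]
  · simp [T, hy]

theorem inCluster_T (α : Config t n p) : InCluster g A (T g A α) := by
  intro u y hy
  simp [T, hy]

variable {g A} in
theorem validConfig_T (hA : ValidConfig A) {α : Config t n p}
    (h : ValidConfig α) : ValidConfig (T g A α) := by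
  intro y u v huv
  by_cases hy : (y : ℕ) < g
  · simp only [T, if_pos hy] at huv
    exact hA y huv
  · simp only [T, if_neg hy] at huv
    exact h y huv

theorem moves_T_subset (α β : Config t n p) : moves (T g A α) (T g A β) ⊆ moves α β := by
  intro d hd
  by_cases hy : (d.2 : ℕ) < g
  · simp [mem_moves, T, hy] at hd
  · simpa [mem_moves, T, hy] using hd

theorem step_T {α β : Config t n p} (h : Step α β) : Step (T g A α) (T g A β) := by
  by_cases heq : T g A α = T g A β
  · exact Or.inl heq
  rcases h with rfl | h
  · exact absurd rfl heq
  refine Or.inr ⟨heq, fun u j hj v y hjy => ?_⟩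
  have hjg : ¬ (j : ℕ) < g := fun hjg => hj (by simp [T, hjg])
  have hyg : ¬ (y : ℕ) < g := by omega
  simp only [T, if_neg hjg, if_neg hyg] at hj ⊢
  exact h.2 u j hj v y hjy

theorem card_moves_T_lt {α β : Config t n p} (hα : InCluster g A α)
    (hβ : ¬ InCluster g A β) : (moves (T g A α) (T g A β)).card < (moves α β).card := by
  obtain ⟨u, y, hy, hne⟩ : ∃ (u : Fin t) (y : Fin n), (y : ℕ) < g ∧ β u y ≠ A u y := by
    simpa [InCluster] using hβ
  refine Finset.card_lt_card ⟨moves_T_subset g A α β, fun hsub => ?_⟩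
  have hmem : (u, y) ∈ moves α β := by
    simpa [mem_moves, hα u y hy] using hne.symm
  simpa [mem_moves, T, hy] using hsub hmem

variable {g A} in
theorem ValidSeq.map_T (hA : ValidConfig A) {l : List (Config t n p)} (hl : ValidSeq l) :
    ValidSeq (l.map (T g A)) := by
  refine ⟨fun γ hγ => ?_, ?_⟩
  · obtain ⟨δ, hδ, rfl⟩ := List.mem_map.mp hγ
    exact validConfig_T hA (hl.1 δ hδ)
  · rw [List.Chain', List.isChain_map]
    exact hl.2.imp fun _ _ h => step_T g A h

end Translative

/-- acyclicity of minimal walks over clusters: if a valid sequence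
from `α` to `β` (both contained in the cluster `A` of grading `g·𝟏`) leaves `A`,
then there is a valid sequence from `α` to `β` contained in `A` of strictly
smaller transfer length; hence every minimal sequence is contained in `A`. -/
theorem acyclicity_of_minimal_walks {t n p : ℕ} (g : ℕ) (A : Config t n p)
    (hA : ValidConfig A) (α β : Config t n p)
    (hα : InCluster g A α) (hβ : InCluster g A β)
    (ν : List (Config t n p)) (hν : ValidSeq ν)
    (hhead : ν.head? = some α) (hlast : ν.getLast? = some β)
    (hleaves : ∃ γ ∈ ν, ¬ InCluster g A γ) :
    ∃ μ : List (Config t n p), ValidSeq μ ∧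
      μ.head? = some α ∧ μ.getLast? = some β ∧
      (∀ γ ∈ μ, InCluster g A γ) ∧
      transferLength μ < transferLength ν := by
  obtain ⟨l, rfl⟩ : ∃ l, ν = α :: l := List.head?_eq_some_iff.mp hhead
  refine ⟨(α :: l).map (T g A), hν.map_T hA, ?_, ?_, ?_, ?_⟩
  · simp [T_eq_of_inCluster g A hα]
  · rw [List.getLast?_map, hlast, Option.map_some, T_eq_of_inCluster g A hβ]
  · simp only [List.mem_map]
    rintro _ ⟨δ, -, rfl⟩
    exact inCluster_T g A δ
  · exact transferLength_map_lt (T g A) (moves_T_subset g A)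
      (fun _ _ => card_moves_T_lt g A) α l hα hleaves
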